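/- Let p and q be probability distributions on a finite set T, and let L_∞(p,q) := max_{x ∈ T} |p(x) − q(x)|. Then there exists a strict total order ⊏ on T such that P(R_{p,q} = 0) ≥ 1/2 + (1/2)·L_∞(p,q)². -/

import Mathlib

/-!
Write `P(R_{p,q} = 0) = W + D/2` with `W = ∑_{y ⊏ x} p x q y` and `D = ∑ p x q x`. Since the
three sums over `y ⊏ x`, `x ⊏ y` and `x = y` of `p x q y` add up to `1`, this is
`1/2 + 1/2 ∑_{y ⊏ x} (p x q y - p y q x)`. Ordering `T` by the share `p x / (p x + q x)` makes
every summand nonnegative, so the sum becomes `∑_{x,y} max (p x q y - p y q x) 0`, independent of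
the order. This dominates the row sum at `z`, which is `p z - q z`, and the column sum at `z`,
which is `q z - p z`; hence it is at least `L∞(p,q) ≥ L∞(p,q)²`.
-/

open MeasureTheory ProbabilityTheory
open scoped ENNReal

noncomputable section

/-- A fair coin: the Bernoulli(1/2) distribution on `Bool`. -/
def fairCoin : Measure Bool := (PMF.bernoulli 2⁻¹ (by norm_num)).toMeasure

instance : IsProbabilityMeasure fairCoin := PMF.toMeasure.isProbabilityMeasure _

/-- `P(R_{p,q} = 0)` for the `m = 1` stochastic rank statistic: sample `X ~ p`, `Y ~ q`
and a fair coin `c`, all mutually independent (so the joint law is the product measure);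
`R_{p,q} = 0` iff `Y ⊏ X`, or `X = Y` and the tie-breaking coin comes up heads. -/
def probR0 {T : Type} [MeasurableSpace T] (rlt : T → T → Prop) (p q : PMF T) : ℝ≥0∞ :=
  ((p.toMeasure.prod q.toMeasure).prod fairCoin)
    {z : (T × T) × Bool | rlt z.1.2 z.1.1 ∨ (z.1.1 = z.1.2 ∧ z.2 = true)}

/-- `P(R_{p,q} = 0 | X ∈ B, Y ∈ C)`: the conditional probability of the event
`R_{p,q} = 0` given `X ∈ B` and `Y ∈ C`, in the setting of `probR0`. -/
def probR0cond {T : Type} [MeasurableSpace T] (rlt : T → T → Prop) (p q : PMF T)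
    (B C : Set T) : ℝ≥0∞ :=
  (((p.toMeasure.prod q.toMeasure).prod fairCoin)[|{z : (T × T) × Bool |
      z.1.1 ∈ B ∧ z.1.2 ∈ C}])
    {z : (T × T) × Bool | rlt z.1.2 z.1.1 ∨ (z.1.1 = z.1.2 ∧ z.2 = true)}

lemma exists_isStrictTotalOrder_forall_le {ι α : Type*} [LinearOrder α] (f : ι → α) :
    ∃ r : ι → ι → Prop, IsStrictTotalOrder ι r ∧ ∀ i j, r i j → f i ≤ f j := by
  refine ⟨MonovaryOrder f f, inferInstance, fun i j hij => ?_⟩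
  obtain h | ⟨h, -⟩ := Prod.lex_iff.1 hij <;> exact h.le

lemma mul_le_mul_of_div_add_le_div_add {a b c d : ℝ} (ha : 0 ≤ a) (hb : 0 ≤ b) (hc : 0 ≤ c)
    (hd : 0 ≤ d) (h : a / (a + b) ≤ c / (c + d)) : a * d ≤ c * b := by
  rcases (add_nonneg ha hb).eq_or_lt with hab | hab
  · obtain ⟨rfl, rfl⟩ : a = 0 ∧ b = 0 := by constructor <;> linarith
    simp
  rcases (add_nonneg hc hd).eq_or_lt with hcd | hcd
  · obtain ⟨rfl, rfl⟩ : c = 0 ∧ d = 0 := by constructor <;> linarith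
    simp
  rw [div_le_div_iff₀ hab hcd] at h
  linarith

section RankSum

variable {T : Type*} [Fintype T] (r : T → T → Prop) [DecidableRel r] (P Q : T → ℝ)

lemma sum_ite_mul_add_half_sum_mul [IsStrictTotalOrder T r] :
    ∑ x, ∑ y, (if r y x then P x * Q y else 0) + 2⁻¹ * ∑ x, P x * Q x
      = 2⁻¹ * ((∑ x, P x) * ∑ y, Q y)
        + 2⁻¹ * ∑ x, ∑ y, if r y x then P x * Q y - P y * Q x else 0 := by
  classical
  have hsplit (x y : T) : P x * Q y = (if r y x then P x * Q y else 0)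
      + (if r x y then P x * Q y else 0) + if x = y then P x * Q y else 0 := by
    rcases trichotomous_of r x y with h | rfl | h
    · simp [h, asymm_of r h, ne_of_irrefl h]
    · simp [irrefl_of r x]
    · simp [h, asymm_of r h, (ne_of_irrefl h).symm]
  have total : (∑ x, P x) * ∑ y, Q y = ∑ x, ∑ y, (if r y x then P x * Q y else 0)
      + ∑ x, ∑ y, (if r y x then P y * Q x else 0) + ∑ x, P x * Q x := by
    rw [Finset.sum_comm (f := fun x y => if r y x then P y * Q x else 0), Finset.sum_mul_sum,
      Finset.sum_congr rfl fun x _ => Finset.sum_congr rfl fun y _ => hsplit x y]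
    simp [Finset.sum_add_distrib]
  have diff : ∑ x, ∑ y, (if r y x then P x * Q y - P y * Q x else 0)
      = ∑ x, ∑ y, (if r y x then P x * Q y else 0)
        - ∑ x, ∑ y, (if r y x then P y * Q x else 0) := by
    simp only [← Finset.sum_sub_distrib, ite_sub_ite, sub_zero]
  rw [total, diff]
  ring

lemma sum_ite_sub_eq_sum_max_zero [IsStrictTotalOrder T r]
    (hr : ∀ x y, r y x → P y * Q x ≤ P x * Q y) :
    ∑ x, ∑ y, (if r y x then P x * Q y - P y * Q x else 0)
      = ∑ x, ∑ y, max (P x * Q y - P y * Q x) 0 := by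
  refine Finset.sum_congr rfl fun x _ => Finset.sum_congr rfl fun y _ => ?_
  rcases trichotomous_of r y x with h | rfl | h
  · rw [if_pos h, max_eq_left (sub_nonneg.2 (hr x y h))]
  · simp [irrefl_of r y]
  · rw [if_neg (asymm_of r h), max_eq_right (sub_nonpos.2 (hr y x h))]

lemma abs_mul_sum_sub_mul_sum_le (z : T) :
    |P z * ∑ y, Q y - Q z * ∑ x, P x| ≤ ∑ x, ∑ y, max (P x * Q y - P y * Q x) 0 := by
  have hnonneg (x : T) : 0 ≤ ∑ y, max (P x * Q y - P y * Q x) 0 :=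
    Finset.sum_nonneg fun _ _ => le_max_right _ _
  have row : P z * ∑ y, Q y - Q z * ∑ x, P x ≤ ∑ y, max (P z * Q y - P y * Q z) 0 := by
    rw [Finset.mul_sum, Finset.mul_sum, ← Finset.sum_sub_distrib]
    exact Finset.sum_le_sum fun y _ => by linarith [le_max_left (P z * Q y - P y * Q z) 0]
  have col : Q z * ∑ x, P x - P z * ∑ y, Q y ≤ ∑ x, max (P x * Q z - P z * Q x) 0 := by
    rw [Finset.mul_sum, Finset.mul_sum, ← Finset.sum_sub_distrib]
    exact Finset.sum_le_sum fun x _ => by linarith [le_max_left (P x * Q z - P z * Q x) 0]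
  rw [abs_sub_le_iff]
  constructor
  · exact row.trans (Finset.single_le_sum (fun x _ => hnonneg x) (Finset.mem_univ z))
  · refine col.trans ?_
    rw [Finset.sum_comm]
    exact Finset.single_le_sum (f := fun y => ∑ x, max (P x * Q y - P y * Q x) 0)
      (fun y _ => Finset.sum_nonneg fun _ _ => le_max_right _ _) (Finset.mem_univ z)

end RankSum

lemma fairCoin_singleton (b : Bool) : fairCoin {b} = 2⁻¹ := by
  cases b <;> simp [fairCoin, PMF.bernoulli_apply, ENNReal.one_sub_inv_two]

lemma probR0_toReal_eq {T : Type} [Fintype T] [MeasurableSpace T] [MeasurableSingletonClass T]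
    (r : T → T → Prop) [DecidableRel r] [Std.Irrefl r] (p q : PMF T) :
    (probR0 r p q).toReal
      = ∑ x, ∑ y, (if r y x then (p x).toReal * (q y).toReal else 0)
        + 2⁻¹ * ∑ x, (p x).toReal * (q x).toReal := by
  classical
  have hsingleton (x y : T) (b : Bool) :
      ((p.toMeasure.prod q.toMeasure).prod fairCoin).real {((x, y), b)}
        = (p x).toReal * (q y).toReal * 2⁻¹ := by
    simp [measureReal_def, ← Set.singleton_prod_singleton, Measure.prod_prod,
      fairCoin_singleton, ENNReal.toReal_mul]
  have hpair (x y : T) :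
      ((if r y x ∨ x = y then (p x).toReal * (q y).toReal * 2⁻¹ else 0)
        + if r y x then (p x).toReal * (q y).toReal * 2⁻¹ else 0)
      = (if r y x then (p x).toReal * (q y).toReal else 0)
        + 2⁻¹ * if x = y then (p x).toReal * (q y).toReal else 0 := by
    rcases eq_or_ne x y with rfl | hxy
    · simp [irrefl, mul_comm]
    · simp only [hxy, or_false, if_false, mul_zero, add_zero]
      split_ifs <;> ring
  rw [probR0, ← measureReal_def, ← Set.coe_toFinset
    {z : (T × T) × Bool | r z.1.2 z.1.1 ∨ (z.1.1 = z.1.2 ∧ z.2 = true)},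
    ← sum_measureReal_singleton, Set.toFinset_ofPred, Finset.sum_filter]
  simp only [Fintype.sum_prod_type, Fintype.sum_bool, hsingleton, and_true, Bool.false_eq_true,
    and_false, or_false, hpair, Finset.sum_add_distrib, ← Finset.mul_sum, Finset.sum_ite_eq,
    Finset.mem_univ, if_true]

lemma PMF.sum_toReal_eq_one {α : Type*} [Fintype α] (p : PMF α) : ∑ a, (p a).toReal = 1 := by
  rw [← ENNReal.toReal_sum fun a _ => p.apply_ne_top a,
    ← tsum_fintype (L := .unconditional _), p.tsum_coe, ENNReal.toReal_one]

/-- **Theorem (lower bound in terms of `L∞(p,q)`).** Let `p, q` be probability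
distributions on a finite set `T` and `L∞(p,q) := max_{x ∈ T} |p x − q x|`.  Then there is
a strict total order `⊏` on `T` such that
`P(R_{p,q} = 0) ≥ 1/2 + (1/2) L∞(p,q)²`. -/
theorem exists_order_probR0_ge_half_add_Linf_sq
    {T : Type} [Fintype T] [Nonempty T] [MeasurableSpace T] [MeasurableSingletonClass T]
    (p q : PMF T) :
    ∃ rlt : T → T → Prop, IsStrictTotalOrder T rlt ∧
      1 / 2 + 1 / 2 *
          (Finset.univ.sup' Finset.univ_nonempty
            (fun x : T => |(p x).toReal - (q x).toReal|)) ^ 2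
        ≤ (probR0 rlt p q).toReal := by
  classical
  set P : T → ℝ := fun x => (p x).toReal
  set Q : T → ℝ := fun x => (q x).toReal
  have hP : ∑ x, P x = 1 := p.sum_toReal_eq_one
  have hQ : ∑ x, Q x = 1 := q.sum_toReal_eq_one
  obtain ⟨r, hr, hshare⟩ := exists_isStrictTotalOrder_forall_le fun x => P x / (P x + Q x)
  have hcompat (x y : T) (h : r y x) : P y * Q x ≤ P x * Q y :=
    mul_le_mul_of_div_add_le_div_add ENNReal.toReal_nonneg ENNReal.toReal_nonneg
      ENNReal.toReal_nonneg ENNReal.toReal_nonneg (hshare y x h)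
  set L := Finset.univ.sup' Finset.univ_nonempty fun x => |P x - Q x|
  have hL0 : 0 ≤ L := (abs_nonneg _).trans
    (Finset.le_sup' (fun x => |P x - Q x|) (Finset.mem_univ (Classical.arbitrary T)))
  have hL1 : L ≤ 1 := Finset.sup'_le _ _ fun x _ =>
    abs_sub_le_of_nonneg_of_le ENNReal.toReal_nonneg
      (hP ▸ Finset.single_le_sum (fun y _ => ENNReal.toReal_nonneg) (Finset.mem_univ x))
      ENNReal.toReal_nonneg
      (hQ ▸ Finset.single_le_sum (fun y _ => ENNReal.toReal_nonneg) (Finset.mem_univ x))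
  have hLS : L ≤ ∑ x, ∑ y, max (P x * Q y - P y * Q x) 0 := Finset.sup'_le _ _ fun x _ => by
    simpa [hP, hQ] using abs_mul_sum_sub_mul_sum_le P Q x
  refine ⟨r, hr, ?_⟩
  rw [probR0_toReal_eq, sum_ite_mul_add_half_sum_mul, sum_ite_sub_eq_sum_max_zero r P Q hcompat,
    hP, hQ]
  linarith [pow_le_of_le_one hL0 hL1 two_ne_zero]

end
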